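/- arXiv:2406.16718 — 3 statements merged into one kernel-verified Lean document; each statement's English description precedes it below -/
import Mathlib

section
/- Under the hypotheses of the previous statement (M a Z-matrix with positive diagonal whose off-diagonal entries are −Δt ∑_j w_j p_{kν}/σ_ν and whose column sums are ≥ 1 by conservativity), if y^n > 0 componentwise then the unique solution z of M z = y^n satisfies z > 0 componentwise. -/
open Finset

/-- Auxiliary: for a Z-matrix (off-diagonal ≤ 0) with column sums ≥ 1,
any solution of `M z = y` with `y ≥ 0` is nonnegative. -/
lemma mprk_aux_nonneg {N : ℕ} (M : Matrix (Fin N) (Fin N) ℝ)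
    (hoff : ∀ k ν, k ≠ ν → M k ν ≤ 0)
    (hcol : ∀ ν, (1:ℝ) ≤ ∑ k, M k ν)
    (z y : Fin N → ℝ) (hMz : M.mulVec z = y) (hy : ∀ k, 0 ≤ y k) :
    ∀ k, 0 ≤ z k := by
  by_contra h
  push_neg at h
  obtain ⟨k0, hk0⟩ := h
  set S : Finset (Fin N) := univ.filter (fun ν => z ν < 0) with hS
  have hk0S : k0 ∈ S := by simp [hS, hk0]
  have hrow : ∀ k, ∑ ν, M k ν * z ν = y k := by
    intro k
    rw [← hMz]
    simp [Matrix.mulVec, dotProduct, mul_comm]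
  have hsum : ∑ k ∈ S, y k = ∑ ν, (∑ k ∈ S, M k ν) * z ν := by
    calc ∑ k ∈ S, y k = ∑ k ∈ S, ∑ ν, M k ν * z ν :=
          Finset.sum_congr rfl fun k _ => (hrow k).symm
      _ = ∑ ν, ∑ k ∈ S, M k ν * z ν := Finset.sum_comm
      _ = ∑ ν, (∑ k ∈ S, M k ν) * z ν := by
          simp [Finset.sum_mul]
  have hneg : ∑ ν, (∑ k ∈ S, M k ν) * z ν < 0 := by
    rw [← Finset.sum_filter_add_sum_filter_not univ (fun ν => z ν < 0)]
    have h1 : ∑ ν ∈ univ.filter (fun ν => z ν < 0), (∑ k ∈ S, M k ν) * z ν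
        ≤ ∑ ν ∈ univ.filter (fun ν => z ν < 0), z ν := by
      apply Finset.sum_le_sum
      intro ν hν
      have hzν : z ν < 0 := (Finset.mem_filter.mp hν).2
      have hc : (1:ℝ) ≤ ∑ k ∈ S, M k ν := by
        have hsplit : ∑ k ∈ univ \ S, M k ν + ∑ k ∈ S, M k ν = ∑ k, M k ν :=
          Finset.sum_sdiff (Finset.subset_univ S)
        have hrest : ∑ k ∈ univ \ S, M k ν ≤ 0 := by
          apply Finset.sum_nonpos
          intro k hk
          apply hoff
          intro hkν
          subst hkν
          have hkS : k ∈ S := by simp [hS, hzν]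
          simp [hkS] at hk
        linarith [hcol ν]
      nlinarith
    have h1' : ∑ ν ∈ univ.filter (fun ν => z ν < 0), z ν < 0 := by
      apply Finset.sum_neg
      · intro ν hν; exact (Finset.mem_filter.mp hν).2
      · exact ⟨k0, hk0S⟩
    have h2 : ∑ ν ∈ univ.filter (fun ν => ¬ z ν < 0), (∑ k ∈ S, M k ν) * z ν ≤ 0 := by
      apply Finset.sum_nonpos
      intro ν hν
      have hzν : 0 ≤ z ν := not_lt.mp (Finset.mem_filter.mp hν).2
      have hc : ∑ k ∈ S, M k ν ≤ 0 := by
        apply Finset.sum_nonpos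
        intro k hk
        apply hoff
        intro hkν
        subst hkν
        have hkS : z k < 0 := by simpa [hS] using hk
        exact absurd hkS (Finset.mem_filter.mp hν).2
      exact mul_nonpos_of_nonpos_of_nonneg hc hzν
    linarith
  have hpos : (0:ℝ) ≤ ∑ k ∈ S, y k := Finset.sum_nonneg fun k _ => hy k
  rw [hsum] at hpos
  linarith

theorem mprk_update_unconditional_positivity
    (N s : ℕ)
    (p d : Fin N → Fin N → Fin s → ℝ)
    (hp : ∀ k ν j, 0 ≤ p k ν j) (hd : ∀ k ν j, 0 ≤ d k ν j)
    (hcons : ∀ k ν j, p k ν j = d ν k j)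
    (w : Fin s → ℝ) (hw : ∀ j, 0 ≤ w j)
    (Δt : ℝ) (hΔt : 0 ≤ Δt)
    (σ : Fin N → ℝ) (hσ : ∀ k, 0 < σ k)
    (M : Matrix (Fin N) (Fin N) ℝ)
    (hM : ∀ k ν, M k ν =
      if k = ν then 1 + Δt * ∑ j, w j * ∑ μ, d k μ j / σ k
      else -(Δt * ∑ j, w j * (p k ν j / σ ν)))
    (yn : Fin N → ℝ) (hyn : ∀ k, 0 < yn k) :
    (∃! z : Fin N → ℝ, M.mulVec z = yn) ∧
    (∀ z : Fin N → ℝ, M.mulVec z = yn → ∀ k, 0 < z k) := by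
  -- off-diagonal entries are nonpositive
  have hoff : ∀ k ν, k ≠ ν → M k ν ≤ 0 := by
    intro k ν hkν
    rw [hM k ν, if_neg hkν]
    have h0 : 0 ≤ Δt * ∑ j, w j * (p k ν j / σ ν) := by
      apply mul_nonneg hΔt
      apply Finset.sum_nonneg
      intro j _
      exact mul_nonneg (hw j) (div_nonneg (hp k ν j) (hσ ν).le)
    linarith
  -- column sums are ≥ 1
  have hcol : ∀ ν, (1:ℝ) ≤ ∑ k, M k ν := by
    intro ν
    rw [← Finset.sum_erase_add _ _ (Finset.mem_univ ν), hM ν ν, if_pos rfl]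
    have herase : ∑ k ∈ univ.erase ν, M k ν
        = -(Δt * ∑ k ∈ univ.erase ν, ∑ j, w j * (p k ν j / σ ν)) := by
      rw [Finset.mul_sum, ← Finset.sum_neg_distrib]
      apply Finset.sum_congr rfl
      intro k hk
      rw [hM k ν, if_neg (Finset.ne_of_mem_erase hk)]
    have hbound : ∑ k ∈ univ.erase ν, ∑ j, w j * (p k ν j / σ ν)
        ≤ ∑ j, w j * ∑ μ, d ν μ j / σ ν := by
      rw [Finset.sum_comm]
      apply Finset.sum_le_sum
      intro j _
      rw [← Finset.mul_sum]
      apply mul_le_mul_of_nonneg_left _ (hw j)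
      calc ∑ k ∈ univ.erase ν, p k ν j / σ ν
          = ∑ k ∈ univ.erase ν, d ν k j / σ ν :=
            Finset.sum_congr rfl fun k _ => by rw [hcons]
        _ ≤ ∑ μ, d ν μ j / σ ν := Finset.sum_le_sum_of_subset_of_nonneg
            (Finset.subset_univ _) (fun μ _ _ => div_nonneg (hd ν μ j) (hσ ν).le)
    rw [herase]
    have hmul := mul_le_mul_of_nonneg_left hbound hΔt
    linarith
  -- nonnegativity of any solution
  have hnonneg : ∀ z : Fin N → ℝ, M.mulVec z = yn → ∀ k, 0 ≤ z k :=
    fun z hz => mprk_aux_nonneg M hoff hcol z yn hz (fun k => (hyn k).le)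
  -- positivity of any solution
  have hposz : ∀ z : Fin N → ℝ, M.mulVec z = yn → ∀ k, 0 < z k := by
    intro z hz k
    have hz0 := hnonneg z hz
    rcases (hz0 k).lt_or_eq with h | h
    · exact h
    · exfalso
      have hrow : ∑ ν, M k ν * z ν = yn k := by
        rw [← hz]; simp [Matrix.mulVec, dotProduct, mul_comm]
      have h1 : ∑ ν ∈ univ.erase k, M k ν * z ν ≤ 0 :=
        Finset.sum_nonpos fun ν hν =>
          mul_nonpos_of_nonpos_of_nonneg
            (hoff k ν (Finset.ne_of_mem_erase hν).symm) (hz0 ν)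
      have hsplit : ∑ ν ∈ univ.erase k, M k ν * z ν + M k k * z k = ∑ ν, M k ν * z ν :=
        Finset.sum_erase_add _ _ (Finset.mem_univ k)
      rw [← h, mul_zero, add_zero] at hsplit
      rw [hsplit] at h1
      linarith [hyn k, hrow]
  refine ⟨?_, hposz⟩
  -- injectivity of mulVec
  have hinj : Function.Injective M.mulVec := by
    intro a b hab
    have e1 : M.mulVec (a - b) = 0 := by rw [Matrix.mulVec_sub, hab, sub_self]
    have e2 : M.mulVec (b - a) = 0 := by rw [Matrix.mulVec_sub, hab, sub_self]
    have h2 := mprk_aux_nonneg M hoff hcol (a - b) 0 e1 (fun k => le_refl 0)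
    have h4 := mprk_aux_nonneg M hoff hcol (b - a) 0 e2 (fun k => le_refl 0)
    funext k
    have := h2 k
    have := h4 k
    simp [Pi.sub_apply] at *
    linarith [h2 k, h4 k]
  have hsurj : Function.Surjective M.mulVec := by
    have hinj' : Function.Injective M.mulVecLin := by
      simpa [Matrix.mulVecLin_apply, Function.Injective] using hinj
    have := (LinearMap.injective_iff_surjective (f := M.mulVecLin)).mp hinj'
    intro y
    obtain ⟨x, hx⟩ := this y
    exact ⟨x, by simpa [Matrix.mulVecLin_apply] using hx⟩
  obtain ⟨z, hz⟩ := hsurj yn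
  exact ⟨z, hz, fun z' hz' => hinj (by rw [hz', hz])⟩
end

section
/- Let f : ℝ → ℝ^N and y : ℝ → ℝ^N. For data y_j > 0, y_{j+1} > 0 at nodes t_j, t_{j+1} = t_j + Δt with slopes m_j, m_{j+1} ∈ ℝ (componentwise), consider the cubic Hermite interpolant H on [t_j, t_{j+1}]. If for each component k one has −3 y_{j,k}/Δt ≤ m_{j,k} ≤ 3 y_{j,k}/Δt and −3 y_{j+1,k}/Δt ≤ m_{j+1,k} ≤ 3 y_{j+1,k}/Δt, then H_k(t) ≥ 0 for all t ∈ [t_j, t_{j+1}]. (It suffices to prove the scalar case N = 1.) -/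
theorem cubic_hermite_nonnegativity
    (Δt yj yj1 mj mj1 : ℝ) (hΔt : 0 < Δt)
    (hyj : 0 < yj) (hyj1 : 0 < yj1)
    (hmjl : -(3 * yj / Δt) ≤ mj) (hmju : mj ≤ 3 * yj / Δt)
    (hmj1l : -(3 * yj1 / Δt) ≤ mj1) (hmj1u : mj1 ≤ 3 * yj1 / Δt)
    (H : ℝ → ℝ)
    (hH : ∀ s, H s = (2 * s ^ 3 - 3 * s ^ 2 + 1) * yj
      + (s ^ 3 - 2 * s ^ 2 + s) * Δt * mj
      + (-2 * s ^ 3 + 3 * s ^ 2) * yj1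
      + (s ^ 3 - s ^ 2) * Δt * mj1) :
    ∀ s : ℝ, 0 ≤ s → s ≤ 1 → 0 ≤ H s := by
  intro s h0 h1
  rw [hH]
  have hl : -(3 * yj) ≤ Δt * mj := by
    have := mul_le_mul_of_nonneg_left hmjl hΔt.le
    calc -(3 * yj) = Δt * (-(3 * yj / Δt)) := by field_simp
      _ ≤ Δt * mj := this
  have hu : Δt * mj1 ≤ 3 * yj1 := by
    have := mul_le_mul_of_nonneg_left hmj1u hΔt.le
    calc Δt * mj1 ≤ Δt * (3 * yj1 / Δt) := this
      _ = 3 * yj1 := by field_simp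
  nlinarith [mul_nonneg (mul_nonneg h0 (sq_nonneg (1 - s))) (by linarith : 0 ≤ Δt * mj + 3 * yj),
    mul_nonneg (mul_nonneg (sq_nonneg s) (by linarith : (0:ℝ) ≤ 1 - s)) (by linarith : 0 ≤ 3 * yj1 - Δt * mj1),
    mul_nonneg (mul_nonneg (mul_nonneg (by linarith : (0:ℝ) ≤ 1-s) (by linarith : (0:ℝ) ≤ 1-s)) (by linarith : (0:ℝ) ≤ 1-s)) hyj.le,
    mul_nonneg (mul_nonneg (mul_nonneg h0 h0) h0) hyj1.le]
end

section
/- Suppose b̄_j : [0,1] → ℝ for j = 1, …, s satisfy b̄_j(θ) ≥ 0 and ∑_{j=1}^s b̄_j(θ) ≤ 1 for all θ, and suppose y^n > 0 componentwise with ∑_k y^n_k = C. Define z ∈ ℝ^N implicitly by z_k = y^n_k + Δt ∑_j b̄_j(θ) ∑_ν ( p_{kν}(y^{(j)}) z_ν/σ̄_ν − d_{kν}(y^{(j)}) z_k/σ̄_k ) with Δt > 0, σ̄ > 0, p_{kν}, d_{kν} ≥ 0 and p_{kν} = d_{νk}. Then the defining linear system has a unique solution z, which satisfies z > 0 componentwise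 and ∑_k z_k = C. -/
theorem mprk_dense_output_wellposed_positive_conservative
    (N s : ℕ)
    (bbar : Fin s → ℝ → ℝ) (θ : ℝ) (hθ0 : 0 ≤ θ) (hθ1 : θ ≤ 1)
    (hbpos : ∀ j, 0 ≤ bbar j θ) (hbsum : ∑ j, bbar j θ ≤ 1)
    (yn : Fin N → ℝ) (hyn : ∀ k, 0 < yn k) (C : ℝ) (hC : ∑ k, yn k = C)
    (Δt : ℝ) (hΔt : 0 < Δt)
    (σ : Fin N → ℝ) (hσ : ∀ k, 0 < σ k)
    (p d : Fin N → Fin N → Fin s → ℝ)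
    (hp : ∀ k ν j, 0 ≤ p k ν j) (hd : ∀ k ν j, 0 ≤ d k ν j)
    (hcons : ∀ k ν j, p k ν j = d ν k j) :
    (∃! z : Fin N → ℝ, ∀ k, z k = yn k + Δt * ∑ j, bbar j θ *
        ∑ ν, (p k ν j * (z ν / σ ν) - d k ν j * (z k / σ k))) ∧
    (∀ z : Fin N → ℝ,
      (∀ k, z k = yn k + Δt * ∑ j, bbar j θ *
        ∑ ν, (p k ν j * (z ν / σ ν) - d k ν j * (z k / σ k))) →
      (∀ k, 0 < z k) ∧ ∑ k, z k = C) := by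
  classical
  set G : (Fin N → ℝ) → Fin N → ℝ := fun z k =>
    Δt * ∑ j, bbar j θ * ∑ ν, (p k ν j * (z ν / σ ν) - d k ν j * (z k / σ k))
    with hGdef
  -- additivity and smul of G
  have hGadd : ∀ z w : Fin N → ℝ, G (z + w) = G z + G w := by
    intro z w
    funext k
    simp only [hGdef, Pi.add_apply]
    rw [← mul_add, ← Finset.sum_add_distrib]
    congr 1
    refine Finset.sum_congr rfl fun j _ => ?_
    rw [← mul_add, ← Finset.sum_add_distrib]
    congr 1
    refine Finset.sum_congr rfl fun ν _ => ?_
    ring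
  have hGsmul : ∀ (c : ℝ) (z : Fin N → ℝ), G (c • z) = c • G z := by
    intro c z
    funext k
    simp only [hGdef, Pi.smul_apply, smul_eq_mul]
    have inner : ∀ j : Fin s,
        ∑ ν, (p k ν j * (c * z ν / σ ν) - d k ν j * (c * z k / σ k))
        = c * ∑ ν, (p k ν j * (z ν / σ ν) - d k ν j * (z k / σ k)) := by
      intro j
      rw [Finset.mul_sum]
      exact Finset.sum_congr rfl fun ν _ => by ring
    rw [Finset.sum_congr rfl fun j (_ : j ∈ Finset.univ) => by rw [inner j]]
    have outer : ∑ j : Fin s, bbar j θ *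
        (c * ∑ ν, (p k ν j * (z ν / σ ν) - d k ν j * (z k / σ k)))
        = c * ∑ j : Fin s, bbar j θ *
          ∑ ν, (p k ν j * (z ν / σ ν) - d k ν j * (z k / σ k)) := by
      rw [Finset.mul_sum]
      exact Finset.sum_congr rfl fun j _ => by ring
    rw [outer]
    ring
  have hGsub : ∀ z w : Fin N → ℝ, G (z - w) = G z - G w := by
    intro z w
    have h1 : z - w = z + (-1 : ℝ) • w := by funext k; simp; ring
    rw [h1, hGadd, hGsmul]
    funext k; simp; ring
  have hGneg : ∀ z : Fin N → ℝ, G (-z) = - G z := by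
    intro z
    have : -z = (0 : Fin N → ℝ) - z := by funext k; simp
    rw [this, hGsub]
    have hG0 : G 0 = 0 := by
      funext k
      simp [hGdef]
    rw [hG0]; funext k; simp
  -- key nonnegativity of the sums over the negative set
  have key : ∀ (w : Fin N → ℝ) (j : Fin s),
      0 ≤ ∑ k ∈ Finset.univ.filter (fun k => w k < 0),
        ∑ ν, (p k ν j * (w ν / σ ν) - d k ν j * (w k / σ k)) := by
    intro w j
    set S := Finset.univ.filter (fun k => w k < 0) with hS
    set T := Finset.univ.filter (fun k : Fin N => ¬ w k < 0) with hT
    have hsplit : ∀ f : Fin N → ℝ, ∑ ν, f ν = ∑ ν ∈ S, f ν + ∑ ν ∈ T, f ν := by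
      intro f
      rw [hS, hT, Finset.sum_filter_add_sum_filter_not]
    have hstep : ∀ k ∈ S, ∑ ν, (p k ν j * (w ν / σ ν) - d k ν j * (w k / σ k))
        = (∑ ν ∈ S, p k ν j * (w ν / σ ν) + ∑ ν ∈ T, p k ν j * (w ν / σ ν))
          - (∑ ν ∈ S, d k ν j * (w k / σ k) + ∑ ν ∈ T, d k ν j * (w k / σ k)) := by
      intro k _
      rw [Finset.sum_sub_distrib, hsplit, hsplit]
    rw [Finset.sum_congr rfl hstep, Finset.sum_sub_distrib,
      Finset.sum_add_distrib, Finset.sum_add_distrib]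
    have hPD : ∑ k ∈ S, ∑ ν ∈ S, p k ν j * (w ν / σ ν)
        = ∑ k ∈ S, ∑ ν ∈ S, d k ν j * (w k / σ k) := by
      calc ∑ k ∈ S, ∑ ν ∈ S, p k ν j * (w ν / σ ν)
          = ∑ k ∈ S, ∑ ν ∈ S, d ν k j * (w ν / σ ν) := by
            exact Finset.sum_congr rfl fun k _ =>
              Finset.sum_congr rfl fun ν _ => by rw [hcons]
        _ = ∑ ν ∈ S, ∑ k ∈ S, d ν k j * (w ν / σ ν) := Finset.sum_comm
        _ = ∑ k ∈ S, ∑ ν ∈ S, d k ν j * (w k / σ k) := rfl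
    have hP2 : 0 ≤ ∑ k ∈ S, ∑ ν ∈ T, p k ν j * (w ν / σ ν) := by
      refine Finset.sum_nonneg fun k _ => Finset.sum_nonneg fun ν hν => ?_
      have hwv : 0 ≤ w ν := by
        have := (Finset.mem_filter.mp hν).2
        linarith
      exact mul_nonneg (hp k ν j) (div_nonneg hwv (hσ ν).le)
    have hD2 : ∑ k ∈ S, ∑ ν ∈ T, d k ν j * (w k / σ k) ≤ 0 := by
      refine Finset.sum_nonpos fun k hk => Finset.sum_nonpos fun ν _ => ?_
      have hwk : w k < 0 := (Finset.mem_filter.mp hk).2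
      exact mul_nonpos_of_nonneg_of_nonpos (hd k ν j)
        (div_nonpos_of_nonpos_of_nonneg hwk.le (hσ k).le)
    linarith
  -- core: solutions of (I - G) w = g with g ≥ 0 are ≥ 0
  have core : ∀ (w g : Fin N → ℝ), (∀ k, 0 ≤ g k) →
      (∀ k, w k = g k + G w k) → ∀ k, 0 ≤ w k := by
    intro w g hg hw
    by_contra hneg
    push_neg at hneg
    obtain ⟨k₀, hk₀⟩ := hneg
    set S := Finset.univ.filter (fun k => w k < 0) with hS
    have hk₀S : k₀ ∈ S := by simp [hS, hk₀]
    have hSne : S.Nonempty := ⟨k₀, hk₀S⟩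
    have hsum_neg : ∑ k ∈ S, w k < 0 := by
      have h := Finset.sum_lt_sum_of_nonempty hSne
        (f := w) (g := fun _ => (0 : ℝ))
        (fun k hk => (Finset.mem_filter.mp hk).2)
      simpa using h
    have hGS : 0 ≤ ∑ k ∈ S, G w k := by
      have h1 : ∑ k ∈ S, G w k = Δt * ∑ j, bbar j θ *
          ∑ k ∈ S, ∑ ν, (p k ν j * (w ν / σ ν) - d k ν j * (w k / σ k)) := by
        simp only [hGdef]
        rw [← Finset.mul_sum]
        congr 1
        rw [Finset.sum_comm]
        refine Finset.sum_congr rfl fun j _ => ?_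
        rw [Finset.mul_sum]
      rw [h1]
      refine mul_nonneg hΔt.le (Finset.sum_nonneg fun j _ => ?_)
      exact mul_nonneg (hbpos j) (key w j)
    have h2 : ∑ k ∈ S, w k = ∑ k ∈ S, g k + ∑ k ∈ S, G w k := by
      rw [← Finset.sum_add_distrib]
      exact Finset.sum_congr rfl fun k _ => hw k
    have h3 : 0 ≤ ∑ k ∈ S, g k := Finset.sum_nonneg fun k _ => hg k
    linarith
  -- uniqueness-type injectivity
  have hinj : ∀ a b : Fin N → ℝ, (∀ k, a k - G a k = b k - G b k) → a = b := by
    intro a b hab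
    have hw : ∀ k, (a - b) k = (0 : Fin N → ℝ) k + G (a - b) k := by
      intro k
      have := hab k
      have h2 : (G (a - b)) k = G a k - G b k := by rw [hGsub]; simp
      simp only [Pi.sub_apply, Pi.zero_apply, h2]
      linarith
    have h1 : ∀ k, 0 ≤ (a - b) k := core (a - b) 0 (fun _ => le_refl _) hw
    have hw' : ∀ k, (b - a) k = (0 : Fin N → ℝ) k + G (b - a) k := by
      intro k
      have := hab k
      have h2 : (G (b - a)) k = G b k - G a k := by rw [hGsub]; simp
      simp only [Pi.sub_apply, Pi.zero_apply, h2]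
      linarith
    have h2 : ∀ k, 0 ≤ (b - a) k := core (b - a) 0 (fun _ => le_refl _) hw'
    funext k
    have := h1 k; have := h2 k
    simp only [Pi.sub_apply] at *
    linarith
  -- existence via finite-dimensional injective ⇒ surjective
  have hex : ∃ z : Fin N → ℝ, ∀ k, z k = yn k + G z k := by
    let L : (Fin N → ℝ) →ₗ[ℝ] (Fin N → ℝ) :=
      { toFun := fun z => z - G z
        map_add' := by
          intro z w
          show (z + w) - G (z + w) = (z - G z) + (w - G w)
          rw [hGadd]
          funext k; simp only [Pi.add_apply, Pi.sub_apply]; ring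
        map_smul' := by
          intro c z
          show (c • z) - G (c • z) = c • (z - G z)
          rw [hGsmul]
          funext k
          simp only [Pi.smul_apply, Pi.sub_apply, smul_eq_mul]; ring }
    have hLinj : Function.Injective L := by
      intro a b hab
      refine hinj a b fun k => ?_
      have : (a - G a) k = (b - G b) k := by
        change (L a) k = (L b) k
        rw [hab]
      simpa using this
    have hLsurj : Function.Surjective L :=
      (LinearMap.injective_iff_surjective).mp hLinj
    obtain ⟨z, hz⟩ := hLsurj yn
    refine ⟨z, fun k => ?_⟩
    have : (z - G z) k = yn k := by
      change (L z) k = yn k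
      rw [hz]
    simp only [Pi.sub_apply] at this
    linarith
  -- the solution predicate
  have heqiff : ∀ z : Fin N → ℝ,
      (∀ k, z k = yn k + Δt * ∑ j, bbar j θ *
        ∑ ν, (p k ν j * (z ν / σ ν) - d k ν j * (z k / σ k))) ↔
      (∀ k, z k = yn k + G z k) := by
    intro z; rfl
  constructor
  · obtain ⟨z, hz⟩ := hex
    refine ⟨z, (heqiff z).mpr hz, fun z' hz' => ?_⟩
    have hz'' := (heqiff z').mp hz'
    exact hinj z' z (fun k => by have := hz'' k; have := hz k; linarith)
  · intro z hzeq
    have hz : ∀ k, z k = yn k + G z k := (heqiff z).mp hzeq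
    have hnn : ∀ k, 0 ≤ z k := core z yn (fun k => (hyn k).le) hz
    constructor
    · intro k
      by_contra hle
      push_neg at hle
      have hzk : z k = 0 := le_antisymm hle (hnn k)
      have hGnn : 0 ≤ G z k := by
        simp only [hGdef]
        refine mul_nonneg hΔt.le (Finset.sum_nonneg fun j _ => ?_)
        refine mul_nonneg (hbpos j) (Finset.sum_nonneg fun ν _ => ?_)
        have : d k ν j * (z k / σ k) = 0 := by rw [hzk]; simp
        rw [this, sub_zero]
        exact mul_nonneg (hp k ν j) (div_nonneg (hnn ν) (hσ ν).le)
      have := hz k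
      have := hyn k
      linarith
    · -- conservation
      have hzero : ∀ j : Fin s,
          ∑ k, ∑ ν, (p k ν j * (z ν / σ ν) - d k ν j * (z k / σ k)) = 0 := by
        intro j
        rw [Finset.sum_congr rfl fun k (_ : k ∈ Finset.univ) =>
          (Finset.sum_sub_distrib
            (f := fun ν => p k ν j * (z ν / σ ν))
            (g := fun ν => d k ν j * (z k / σ k))),
          Finset.sum_sub_distrib]
        have hPD : ∑ k, ∑ ν, p k ν j * (z ν / σ ν)
            = ∑ k, ∑ ν, d k ν j * (z k / σ k) := by
          calc ∑ k, ∑ ν, p k ν j * (z ν / σ ν)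
              = ∑ k, ∑ ν, d ν k j * (z ν / σ ν) := by
                exact Finset.sum_congr rfl fun k _ =>
                  Finset.sum_congr rfl fun ν _ => by rw [hcons]
            _ = ∑ ν, ∑ k, d ν k j * (z ν / σ ν) := Finset.sum_comm
            _ = ∑ k, ∑ ν, d k ν j * (z k / σ k) := rfl
        rw [hPD, sub_self]
      have hsum : ∑ k, z k = ∑ k, yn k + ∑ k, G z k := by
        rw [← Finset.sum_add_distrib]
        exact Finset.sum_congr rfl fun k _ => hz k
      have hGzero : ∑ k, G z k = 0 := by
        simp only [hGdef]
        rw [← Finset.mul_sum, Finset.sum_comm]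
        have : ∀ j ∈ (Finset.univ : Finset (Fin s)),
            ∑ k, bbar j θ * ∑ ν, (p k ν j * (z ν / σ ν) - d k ν j * (z k / σ k))
            = 0 := by
          intro j _
          rw [← Finset.mul_sum, hzero j, mul_zero]
        rw [Finset.sum_congr rfl this]
        simp
      rw [hsum, hGzero, add_zero, hC]
end
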